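/- arXiv:1007.1214 — 2 statements merged into one kernel-verified Lean document; each statement's English description precedes it below -/
import Mathlib

section
/- For double edges B, B' for the same entry (i,j) with no edge in common, P(M(B') | M(B)) − P(M(B')) summed over all such B' equals (r_i−2)^{\underline{2}}(c_j−2)^{\underline{2}}/(2(N−2)^{\underline{2}}) − r_i^{\underline{2}} c_j^{\underline{2}}/(2 N^{\underline{2}}), and this quantity is ≤ 0. -/
/-!
Under a uniformly random permutation `σ`, a partial matching `B` (no two of its edges share
a row token or a column token) is matched with probability `(N - |B|)! / N!`: the permutations
matching `B` form a left coset of the pointwise stabiliser of the row tokens of `B`. Hence every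
summand equals `1 / (N-2)^{\underline 2}`, respectively `1 / N^{\underline 2}`, and the sums reduce
to counting double edges. A double edge inside `R × C` comes from exactly two pairs (ordered pair
of distinct rows in `R`, ordered pair of distinct columns in `C`), so there are
`|R|^{\underline 2} |C|^{\underline 2} / 2` of them; those disjoint from `B` are the double edges
inside `(R \ rows B) × (C \ cols B)`. The inequality is `(a-2)(a-3) N(N-1) ≤ a(a-1)(N-2)(N-3)`
for `a ≤ N`, the product of `(a-2) N ≤ a (N-2)` and `(a-3)(N-1) ≤ (a-1)(N-3)`.
-/

open Finset

/-- A double edge for entry `(i,j)`. -/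
def IsDoubleEdge {N m n : ℕ} (rowOf : Fin N → Fin m) (colOf : Fin N → Fin n)
    (i : Fin m) (j : Fin n) (B : Finset (Fin N × Fin N)) : Prop :=
  B.card = 2 ∧ (∀ p ∈ B, rowOf p.1 = i ∧ colOf p.2 = j) ∧
    ∀ p ∈ B, ∀ q ∈ B, p ≠ q → p.1 ≠ q.1 ∧ p.2 ≠ q.2

instance {N m n : ℕ} (rowOf : Fin N → Fin m) (colOf : Fin N → Fin n)
    (i : Fin m) (j : Fin n) : DecidablePred (IsDoubleEdge rowOf colOf i j) := fun _ =>
  by unfold IsDoubleEdge; infer_instance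

/-- `M(B)`: all edges of `B` are matched by `σ`. -/
def Matched {N : ℕ} (σ : Equiv.Perm (Fin N)) (B : Finset (Fin N × Fin N)) : Prop :=
  ∀ p ∈ B, σ p.1 = p.2

instance {N : ℕ} (σ : Equiv.Perm (Fin N)) (B : Finset (Fin N × Fin N)) :
    Decidable (Matched σ B) := by unfold Matched; infer_instance

open scoped Nat

lemma descFactorial_two (k : ℕ) : k.descFactorial 2 = k * (k - 1) := by
  rw [Nat.descFactorial_succ, Nat.descFactorial_one, mul_comm]

lemma factorial_sub_div_factorial {n k : ℕ} (h : k ≤ n) :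
    ((n - k)! : ℝ) / n ! = (n.descFactorial k : ℝ)⁻¹ := by
  rw [← Nat.factorial_mul_descFactorial h, Nat.cast_mul, div_mul_cancel_left₀ (by positivity)]

lemma sub_mul_sub_le_sub_mul_sub {a n k l : ℕ} (hlk : l ≤ k) (han : a ≤ n) :
    (a - k) * (n - l) ≤ (a - l) * (n - k) := by
  rcases lt_or_ge a k with hak | hka
  · simp [Nat.sub_eq_zero_of_le hak.le]
  · zify [hka, hlk.trans hka, hka.trans han, (hlk.trans hka).trans han]
    nlinarith

lemma descFactorial_sub_two_mul_le {a n : ℕ} (h : a ≤ n) :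
    (a - 2).descFactorial 2 * n.descFactorial 2
      ≤ a.descFactorial 2 * (n - 2).descFactorial 2 := by
  simp only [descFactorial_two, Nat.sub_sub]
  calc (a - 2) * (a - (2 + 1)) * (n * (n - 1))
      = ((a - 2) * (n - 0)) * ((a - 3) * (n - 1)) := by simp only [Nat.sub_zero]; ring
    _ ≤ ((a - 0) * (n - 2)) * ((a - 1) * (n - 3)) :=
        Nat.mul_le_mul (sub_mul_sub_le_sub_mul_sub (by norm_num) h)
          (sub_mul_sub_le_sub_mul_sub (by norm_num) h)
    _ = a * (a - 1) * ((n - 2) * (n - (2 + 1))) := by simp only [Nat.sub_zero]; ring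

lemma descFactorial_sub_two_div_le {a n : ℕ} (b : ℕ) (h : a ≤ n) :
    ((a - 2).descFactorial 2 * (b - 2).descFactorial 2 : ℝ) / (2 * (n - 2).descFactorial 2)
      ≤ (a.descFactorial 2 * b.descFactorial 2 : ℝ) / (2 * n.descFactorial 2) := by
  rcases Nat.eq_zero_or_pos ((n - 2).descFactorial 2) with h0 | hpos
  · rw [h0, Nat.cast_zero, mul_zero, div_zero]
    positivity
  have hpos' : 0 < n.descFactorial 2 := hpos.trans_le (Nat.descFactorial_le 2 (n.sub_le 2))
  have key : (a - 2).descFactorial 2 * (b - 2).descFactorial 2 * n.descFactorial 2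
      ≤ a.descFactorial 2 * b.descFactorial 2 * (n - 2).descFactorial 2 :=
    calc _ = (a - 2).descFactorial 2 * n.descFactorial 2 * (b - 2).descFactorial 2 := by ring
      _ ≤ a.descFactorial 2 * (n - 2).descFactorial 2 * b.descFactorial 2 :=
        Nat.mul_le_mul (descFactorial_sub_two_mul_le h) (Nat.descFactorial_le 2 (b.sub_le 2))
      _ = _ := by ring
  rw [div_le_div_iff₀ (by positivity) (by positivity)]
  have key' : ((a - 2).descFactorial 2 * (b - 2).descFactorial 2 * n.descFactorial 2 : ℝ)
      ≤ a.descFactorial 2 * b.descFactorial 2 * (n - 2).descFactorial 2 := by exact_mod_cast key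
  linarith

section PartialMatching

variable {α : Type*}

def IsPartialMatching (B : Finset (α × α)) : Prop :=
  (B : Set (α × α)).Pairwise fun p q => p.1 ≠ q.1 ∧ p.2 ≠ q.2

lemma IsPartialMatching.injOn_fst {B : Finset (α × α)} (hB : IsPartialMatching B) :
    Set.InjOn Prod.fst (B : Set (α × α)) :=
  Set.injOn_iff_pairwise_ne.2 (hB.imp fun _ _ => And.left)

lemma IsPartialMatching.injOn_snd {B : Finset (α × α)} (hB : IsPartialMatching B) :
    Set.InjOn Prod.snd (B : Set (α × α)) :=
  Set.injOn_iff_pairwise_ne.2 (hB.imp fun _ _ => And.right)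

lemma IsPartialMatching.union [DecidableEq α] {B B' : Finset (α × α)}
    (hB' : IsPartialMatching B') (hB : IsPartialMatching B)
    (hB'B : ∀ p ∈ B', ∀ q ∈ B, p.1 ≠ q.1 ∧ p.2 ≠ q.2) :
    IsPartialMatching (B' ∪ B) := by
  rw [IsPartialMatching, coe_union, Set.pairwise_union]
  exact ⟨hB', hB, fun p hp q hq _ => ⟨hB'B p hp q hq, (hB'B p hp q hq).imp Ne.symm Ne.symm⟩⟩

end PartialMatching

section Matched

variable {N : ℕ} {B : Finset (Fin N × Fin N)}

lemma IsPartialMatching.exists_matched (hB : IsPartialMatching B) :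
    ∃ τ : Equiv.Perm (Fin N), Matched τ B := by
  classical
  let eFst := Equiv.Set.imageOfInjOn Prod.fst _ hB.injOn_fst
  let eSnd := Equiv.Set.imageOfInjOn Prod.snd _ hB.injOn_snd
  refine ⟨(eFst.symm.trans eSnd).extendSubtype, fun p hp => ?_⟩
  have hsymm : eFst.symm ⟨p.1, p, hp, rfl⟩ = ⟨p, hp⟩ := eFst.symm_apply_eq.2 rfl
  rw [Equiv.extendSubtype_apply_of_mem _ _ ⟨p, hp, rfl⟩, Equiv.trans_apply, hsymm]
  rfl

lemma IsPartialMatching.card_matched (hB : IsPartialMatching B) :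
    Fintype.card {σ : Equiv.Perm (Fin N) // Matched σ B} = (N - #B)! := by
  classical
  obtain ⟨τ, hτ⟩ := hB.exists_matched
  let S := B.image Prod.fst
  have hS : #S = #B := card_image_of_injOn hB.injOn_fst
  have hcoset : ∀ σ, Matched σ B ↔ ∀ a, ¬ a ∉ S → Equiv.mulLeft τ⁻¹ σ a = a := by
    intro σ
    simp only [not_not, S, mem_image, Equiv.coe_mulLeft, Equiv.Perm.mul_apply,
      Equiv.Perm.inv_eq_iff_eq]
    refine ⟨?_, fun h p hp => (h p.1 ⟨p, hp, rfl⟩).trans (hτ p hp)⟩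
    rintro h _ ⟨p, hp, rfl⟩
    rw [h p hp, hτ p hp]
  rw [Fintype.card_congr
      ((Equiv.mulLeft τ⁻¹).subtypeEquiv (q := fun ρ => ∀ a, ¬ a ∉ S → ρ a = a) hcoset),
    ← Fintype.card_congr (Equiv.Perm.subtypeEquivSubtypePerm _), Fintype.card_perm,
    Fintype.card_subtype_compl, Fintype.card_fin, Fintype.card_coe, hS]

lemma card_matched_and_matched {B' : Finset (Fin N × Fin N)}
    (hB' : IsPartialMatching B') (hB : IsPartialMatching B)
    (hB'B : ∀ p ∈ B', ∀ q ∈ B, p.1 ≠ q.1 ∧ p.2 ≠ q.2) :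
    Fintype.card {σ : Equiv.Perm (Fin N) // Matched σ B' ∧ Matched σ B}
      = (N - (#B' + #B))! := by
  have hunion : ∀ σ, Matched σ B' ∧ Matched σ B ↔ Matched σ (B' ∪ B) := by
    simp [Matched, or_imp, forall_and]
  have hdisj : Disjoint B' B := disjoint_left.2 fun p hp hpB => (hB'B p hp p hpB).1 rfl
  rw [Fintype.card_congr (Equiv.subtypeEquivRight hunion), (hB'.union hB hB'B).card_matched,
    card_union_of_disjoint hdisj]

end Matched

lemma card_offDiag_eq_descFactorial {α : Type*} (s : Finset α) :
    #s.offDiag = (#s).descFactorial 2 := by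
  rw [offDiag_card, descFactorial_two, Nat.mul_sub_one]

section DoubleEdges

variable {α : Type*} [DecidableEq α]

def doubleEdges (R C : Finset α) : Finset (Finset (α × α)) :=
  {B ∈ (R ×ˢ C).powersetCard 2 |
    ∀ p ∈ B, ∀ q ∈ B, p ≠ q → p.1 ≠ q.1 ∧ p.2 ≠ q.2}

lemma mem_doubleEdges {R C : Finset α} {B : Finset (α × α)} :
    B ∈ doubleEdges R C ↔ #B = 2 ∧ (∀ p ∈ B, p.1 ∈ R ∧ p.2 ∈ C) ∧
      ∀ p ∈ B, ∀ q ∈ B, p ≠ q → p.1 ≠ q.1 ∧ p.2 ≠ q.2 := by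
  simp only [doubleEdges, mem_filter, mem_powersetCard, subset_iff, mem_product]
  tauto

lemma isPartialMatching_of_mem_doubleEdges {R C : Finset α} {B : Finset (α × α)}
    (hB : B ∈ doubleEdges R C) : IsPartialMatching B :=
  (mem_doubleEdges.1 hB).2.2

def doubleEdgeOf (x : (α × α) × (α × α)) : Finset (α × α) :=
  {(x.1.1, x.2.1), (x.1.2, x.2.2)}

lemma doubleEdgeOf_mem_doubleEdges {R C : Finset α} {x : (α × α) × (α × α)}
    (hx : x ∈ R.offDiag ×ˢ C.offDiag) : doubleEdgeOf x ∈ doubleEdges R C := by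
  obtain ⟨⟨a, a'⟩, ⟨b, b'⟩⟩ := x
  simp only [mem_product, mem_offDiag] at hx
  rw [doubleEdgeOf, mem_doubleEdges]
  grind

lemma card_filter_doubleEdgeOf_eq {R C : Finset α} {B : Finset (α × α)}
    (hB : B ∈ doubleEdges R C) : #{x ∈ R.offDiag ×ˢ C.offDiag | doubleEdgeOf x = B} = 2 := by
  obtain ⟨hcard, hRC, hpw⟩ := mem_doubleEdges.1 hB
  obtain ⟨p, q, hpq, rfl⟩ := card_eq_two.1 hcard
  have hp : p ∈ ({p, q} : Finset (α × α)) := mem_insert_self p {q}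
  have hq : q ∈ ({p, q} : Finset (α × α)) := mem_insert_of_mem (mem_singleton_self q)
  have hdiff := hpw p hp q hq hpq
  have hpRC := hRC p hp
  have hqRC := hRC q hq
  rw [card_eq_two]
  refine ⟨((p.1, q.1), (p.2, q.2)), ((q.1, p.1), (q.2, p.2)), by grind, ?_⟩
  ext ⟨⟨a, a'⟩, ⟨b, b'⟩⟩
  rw [mem_filter, mem_product, mem_offDiag, mem_offDiag]
  simp only [doubleEdgeOf, mem_insert, mem_singleton]
  grind

lemma two_mul_card_doubleEdges (R C : Finset α) :
    2 * #(doubleEdges R C) = (#R).descFactorial 2 * (#C).descFactorial 2 := by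
  rw [← card_offDiag_eq_descFactorial, ← card_offDiag_eq_descFactorial, ← card_product,
    card_eq_sum_card_fiberwise fun _ hx => doubleEdgeOf_mem_doubleEdges hx,
    sum_congr rfl fun _ hB => card_filter_doubleEdgeOf_eq hB, sum_const, smul_eq_mul, mul_comm]

lemma card_sdiff_image_fst {R C : Finset α} {B : Finset (α × α)} (hB : B ∈ doubleEdges R C) :
    #(R \ B.image Prod.fst) = #R - 2 := by
  rw [card_sdiff_of_subset (image_subset_iff.2 fun p hp => ((mem_doubleEdges.1 hB).2.1 p hp).1),
    card_image_of_injOn (isPartialMatching_of_mem_doubleEdges hB).injOn_fst,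
    (mem_doubleEdges.1 hB).1]

lemma card_sdiff_image_snd {R C : Finset α} {B : Finset (α × α)} (hB : B ∈ doubleEdges R C) :
    #(C \ B.image Prod.snd) = #C - 2 := by
  rw [card_sdiff_of_subset (image_subset_iff.2 fun p hp => ((mem_doubleEdges.1 hB).2.1 p hp).2),
    card_image_of_injOn (isPartialMatching_of_mem_doubleEdges hB).injOn_snd,
    (mem_doubleEdges.1 hB).1]

end DoubleEdges

section Entry

variable {N m n : ℕ} (rowOf : Fin N → Fin m) (colOf : Fin N → Fin n) (i : Fin m) (j : Fin n)

lemma filter_isDoubleEdge_eq :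
    univ.filter (fun B => IsDoubleEdge rowOf colOf i j B)
      = doubleEdges (univ.filter fun t => rowOf t = i) (univ.filter fun t => colOf t = j) := by
  ext B
  rw [mem_filter, mem_doubleEdges]
  simp only [mem_univ, true_and, IsDoubleEdge, mem_filter]

lemma filter_isDoubleEdge_disjoint_eq (B : Finset (Fin N × Fin N)) :
    univ.filter (fun B' =>
        IsDoubleEdge rowOf colOf i j B' ∧ ∀ p ∈ B', ∀ q ∈ B, p.1 ≠ q.1 ∧ p.2 ≠ q.2)
      = doubleEdges ((univ.filter fun t => rowOf t = i) \ B.image Prod.fst)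
          ((univ.filter fun t => colOf t = j) \ B.image Prod.snd) := by
  ext B'
  simp only [mem_filter, mem_univ, true_and, IsDoubleEdge, mem_doubleEdges, mem_sdiff, mem_image]
  grind

end Entry

theorem sum_condProb_disjoint_double_edges_eq_general
    (N m n : ℕ) (r : Fin m → ℕ) (c : Fin n → ℕ)
    (rowOf : Fin N → Fin m) (colOf : Fin N → Fin n)
    (hrow : ∀ i, (univ.filter (fun t => rowOf t = i)).card = r i)
    (hcol : ∀ j, (univ.filter (fun t => colOf t = j)).card = c j)
    (i : Fin m) (j : Fin n)
    (hN : 4 ≤ N)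
    (B : Finset (Fin N × Fin N)) (hB : IsDoubleEdge rowOf colOf i j B) :
    (∑ B' ∈ univ.filter (fun B' : Finset (Fin N × Fin N) =>
          IsDoubleEdge rowOf colOf i j B' ∧
          ∀ p ∈ B', ∀ q ∈ B, p.1 ≠ q.1 ∧ p.2 ≠ q.2),
        (Fintype.card {σ : Equiv.Perm (Fin N) // Matched σ B' ∧ Matched σ B} : ℝ)
          / (Fintype.card {σ : Equiv.Perm (Fin N) // Matched σ B} : ℝ))
      - (∑ B' ∈ univ.filter (fun B' : Finset (Fin N × Fin N) =>
          IsDoubleEdge rowOf colOf i j B'),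
        (Fintype.card {σ : Equiv.Perm (Fin N) // Matched σ B'} : ℝ) / Nat.factorial N)
      = (Nat.descFactorial (r i - 2) 2 * Nat.descFactorial (c j - 2) 2 : ℝ)
          / (2 * Nat.descFactorial (N - 2) 2)
        - (Nat.descFactorial (r i) 2 * Nat.descFactorial (c j) 2 : ℝ)
          / (2 * Nat.descFactorial N 2) ∧
    (Nat.descFactorial (r i - 2) 2 * Nat.descFactorial (c j - 2) 2 : ℝ)
        / (2 * Nat.descFactorial (N - 2) 2)
      - (Nat.descFactorial (r i) 2 * Nat.descFactorial (c j) 2 : ℝ)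
        / (2 * Nat.descFactorial N 2) ≤ 0 := by
  set Fdisj := univ.filter (fun B' : Finset (Fin N × Fin N) =>
    IsDoubleEdge rowOf colOf i j B' ∧ ∀ p ∈ B', ∀ q ∈ B, p.1 ≠ q.1 ∧ p.2 ≠ q.2)
    with hFdisj
  set Fall := univ.filter (fun B' : Finset (Fin N × Fin N) => IsDoubleEdge rowOf colOf i j B')
    with hFall
  have hcond : ∀ B' ∈ Fdisj,
      (Fintype.card {σ : Equiv.Perm (Fin N) // Matched σ B' ∧ Matched σ B} : ℝ)
        / Fintype.card {σ : Equiv.Perm (Fin N) // Matched σ B}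
        = ((N - 2).descFactorial 2 : ℝ)⁻¹ := by
    intro B' hB'
    obtain ⟨hB'2, hcross⟩ := (mem_filter.1 hB').2
    rw [card_matched_and_matched hB'2.2.2 hB.2.2 hcross, IsPartialMatching.card_matched hB.2.2,
      hB'2.1, hB.1, ← factorial_sub_div_factorial (by omega), Nat.sub_sub]
  have huncond : ∀ B' ∈ Fall,
      (Fintype.card {σ : Equiv.Perm (Fin N) // Matched σ B'} : ℝ) / N !
        = (N.descFactorial 2 : ℝ)⁻¹ := by
    intro B' hB'
    rw [IsPartialMatching.card_matched (mem_filter.1 hB').2.2.2, (mem_filter.1 hB').2.1,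
      factorial_sub_div_factorial (by omega)]
  have hBde : B ∈ doubleEdges (univ.filter fun t => rowOf t = i)
      (univ.filter fun t => colOf t = j) :=
    filter_isDoubleEdge_eq rowOf colOf i j ▸ mem_filter.2 ⟨mem_univ _, hB⟩
  have hcard_disj : (2 * #Fdisj : ℝ) = (r i - 2).descFactorial 2 * (c j - 2).descFactorial 2 := by
    rw [hFdisj, filter_isDoubleEdge_disjoint_eq]
    exact_mod_cast (two_mul_card_doubleEdges _ _).trans
      (by rw [card_sdiff_image_fst hBde, card_sdiff_image_snd hBde, hrow, hcol])
  have hcard_all : (2 * #Fall : ℝ) = (r i).descFactorial 2 * (c j).descFactorial 2 := by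
    rw [hFall, filter_isDoubleEdge_eq]
    exact_mod_cast (two_mul_card_doubleEdges _ _).trans (by rw [hrow, hcol])
  have hri : r i ≤ N := (hrow i).symm.trans_le ((card_le_univ _).trans_eq (Fintype.card_fin N))
  refine ⟨?_, sub_nonpos.2 (descFactorial_sub_two_div_le _ hri)⟩
  rw [sum_congr rfl hcond, sum_congr rfl huncond, sum_const, sum_const, nsmul_eq_mul,
    nsmul_eq_mul, ← hcard_disj, ← hcard_all]
  ring

/-- for a fixed double edge `B` for entry `(i,j)`, the sum over double
edges `B'` for `(i,j)` sharing no edge (no token) with `B` of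
`P(M(B') | M(B)) − P(M(B'))` equals
`(r_i−2)^{\underline{2}}(c_j−2)^{\underline{2}}/(2(N−2)^{\underline{2}})
  − r_i^{\underline{2}} c_j^{\underline{2}}/(2 N^{\underline{2}})`,
and this quantity is `≤ 0`.  (As in the paper, the unconditional term sums
`P(M(B'))` over all double edges of the entry `(i,j)`.) -/
theorem sum_condProb_disjoint_double_edges_eq
    (N m n : ℕ) (r : Fin m → ℕ) (c : Fin n → ℕ)
    (hr : ∑ i, r i = N) (hc : ∑ j, c j = N)
    (rowOf : Fin N → Fin m) (colOf : Fin N → Fin n)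
    (hrow : ∀ i, (univ.filter (fun t => rowOf t = i)).card = r i)
    (hcol : ∀ j, (univ.filter (fun t => colOf t = j)).card = c j)
    (i : Fin m) (j : Fin n)
    (hri : 2 ≤ r i) (hcj : 2 ≤ c j) (hN : 4 ≤ N)
    (B : Finset (Fin N × Fin N)) (hB : IsDoubleEdge rowOf colOf i j B) :
    (∑ B' ∈ univ.filter (fun B' : Finset (Fin N × Fin N) =>
          IsDoubleEdge rowOf colOf i j B' ∧
          ∀ p ∈ B', ∀ q ∈ B, p.1 ≠ q.1 ∧ p.2 ≠ q.2),
        (Fintype.card {σ : Equiv.Perm (Fin N) // Matched σ B' ∧ Matched σ B} : ℝ)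
          / (Fintype.card {σ : Equiv.Perm (Fin N) // Matched σ B} : ℝ))
      - (∑ B' ∈ univ.filter (fun B' : Finset (Fin N × Fin N) =>
          IsDoubleEdge rowOf colOf i j B'),
        (Fintype.card {σ : Equiv.Perm (Fin N) // Matched σ B'} : ℝ) / Nat.factorial N)
      = (Nat.descFactorial (r i - 2) 2 * Nat.descFactorial (c j - 2) 2 : ℝ)
          / (2 * Nat.descFactorial (N - 2) 2)
        - (Nat.descFactorial (r i) 2 * Nat.descFactorial (c j) 2 : ℝ)
          / (2 * Nat.descFactorial N 2) ∧
    (Nat.descFactorial (r i - 2) 2 * Nat.descFactorial (c j - 2) 2 : ℝ)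
        / (2 * Nat.descFactorial (N - 2) 2)
      - (Nat.descFactorial (r i) 2 * Nat.descFactorial (c j) 2 : ℝ)
        / (2 * Nat.descFactorial N 2) ≤ 0 :=
  sum_condProb_disjoint_double_edges_eq_general N m n r c rowOf colOf hrow hcol i j hN B hB
end

section
/- If μ(N) = Σ_{(i,j)} r_i^{\underline{2}} c_j^{\underline{2}}/(2 N^{\underline{2}}) satisfies limsup_{N→∞} μ(N) = ∞ (i.e., Σ_{i,j} r_i(r_i−1)c_j(c_j−1) is not O(N^2)), then liminf_{N→∞} P(T ∈ Ω_{r,c}) = 0; that is, the probability that the configuration model outputs a binary table is not bounded away from 0. -/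
/-!
Second moment method. Token `t` of the configuration model lands in the cell
`(row t, col (σ t))` for a uniformly random permutation `σ`; let `X σ` count the ordered pairs of
distinct tokens sharing a cell, so that every binary table has `X = 0`. Writing `P`, `Q` for the
ordered pairs of distinct tokens in a common row, resp. column (`#P = ∑ rᵢ(rᵢ-1)`,
`#Q = ∑ cⱼ(cⱼ-1)`), a pair in `P` collides with probability `#Q / (N(N-1))`. Splitting `E[X²]`
according to whether two pairs of `P` share two, one or no tokens, and bounding the largest row
and column by `r₀² ≤ 3 #P`, `c₀² ≤ 3 #Q`, gives `Var X / (E X)² ≤ 26 N / √(#P #Q)`. Hence the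
probability of a binary table is at most `26 N / √(#P #Q)`, which is small whenever
`#P #Q / N²` is large, and that happens for infinitely many `N` when `#P #Q` is not `O(N²)`.
-/

open Finset

/-- The probability that the configuration model (with token-to-row map `rowOf N`
and token-to-column map `colOf N`) produces a binary table, for size parameter `N`. -/
noncomputable def probBinary (rowOf colOf : (N : ℕ) → Fin N → ℕ) (N : ℕ) : ℝ :=
  (Fintype.card {σ : Equiv.Perm (Fin N) //
      ∀ i ∈ Finset.range N, ∀ j ∈ Finset.range N,
        (univ.filter (fun t => rowOf N t = i ∧ colOf N (σ t) = j)).card ≤ 1} : ℝ)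
    / Nat.factorial N

open Function Equiv
open scoped Nat

/-- The second moment method `P(f = 0) ≤ Var f / (E f)²`, cleared of denominators. -/
theorem card_filter_eq_zero_mul_sq_sum_le {ι : Type*} (s : Finset ι) (f : ι → ℝ) :
    #{i ∈ s | f i = 0} * (∑ i ∈ s, f i) ^ 2 ≤
      #s * (#s * ∑ i ∈ s, f i ^ 2 - (∑ i ∈ s, f i) ^ 2) := by
  classical
  have hcs : (∑ i ∈ s, f i) ^ 2 ≤ #{i ∈ s | f i ≠ 0} * ∑ i ∈ s, f i ^ 2 := by
    rw [← sum_filter_ne_zero]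
    exact sq_sum_le_card_mul_sum_sq.trans (mul_le_mul_of_nonneg_left
      (sum_le_sum_of_subset_of_nonneg (filter_subset _ _) fun i _ _ => sq_nonneg _) (by positivity))
  have hsplit : (#{i ∈ s | f i = 0} : ℝ) + #{i ∈ s | f i ≠ 0} = #s := by
    exact_mod_cast card_filter_add_card_filter_not _
  have hA : 0 ≤ (∑ i ∈ s, f i) ^ 2 := sq_nonneg _
  have hB : 0 ≤ ∑ i ∈ s, f i ^ 2 := sum_nonneg fun i _ => sq_nonneg (f i)
  have hy : (0 : ℝ) ≤ #{i ∈ s | f i = 0} := Nat.cast_nonneg _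
  have hz : (0 : ℝ) ≤ #{i ∈ s | f i ≠ 0} := Nat.cast_nonneg _
  rw [← hsplit]
  generalize (#{i ∈ s | f i = 0} : ℝ) = y at hsplit hy ⊢
  generalize (#{i ∈ s | f i ≠ 0} : ℝ) = z at hcs hsplit hz ⊢
  generalize (∑ i ∈ s, f i) ^ 2 = A at hcs hA ⊢
  generalize ∑ i ∈ s, f i ^ 2 = B at hcs hB ⊢
  rcases hz.eq_or_lt with rfl | hpos
  · nlinarith [mul_nonneg (mul_nonneg hy hy) hB]
  · refine le_of_mul_le_mul_left ?_ hpos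
    nlinarith [mul_nonneg hA (sq_nonneg y), mul_le_mul_of_nonneg_left hcs (sq_nonneg (y + z))]

/-- The numerical core of the second moment bound, for `n = x + 4` tokens: `K = n!`, `F = (n-4)!`,
`M` and `S` are the first moment and (a bound on) the second moment of the collision count,
`s² = #P #Q` and `R ≥ r₀ c₀`. -/
theorem div_mul_le_of_second_moment {x s R F K M Z S : ℝ} (hx : 0 ≤ x)
    (hs : 26 * (x + 4) ≤ s) (hsn : s ≤ (x + 4) ^ 2) (hR : R ≤ 3 * s) (hF : 0 < F)
    (hK : K = (x + 4) * (x + 3) * (x + 2) * (x + 1) * F) (hM : M = s ^ 2 * ((x + 2) * (x + 1) * F))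
    (hZ : Z * M ^ 2 ≤ K * (K * S - M ^ 2))
    (hS : S ≤ 2 * s ^ 2 * ((x + 2) * (x + 1) * F) + 4 * R * s ^ 2 * ((x + 1) * F) + s ^ 4 * F) :
    Z / K * s ≤ 26 * (x + 4) := by
  have hs0 : 0 < s := by linarith
  -- `(K S - M²) s ≤ 26 (x + 4) M²` for `S` at its bound, divided by `F² s³ (x + 2) (x + 1)`
  have hpoly : (x + 4) * (x + 3) * (2 * (x + 2) * (x + 1) + 4 * R * (x + 1)) + s ^ 2 * (4 * x + 10)
      ≤ 26 * (x + 4) * s * (x + 2) * (x + 1) := by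
    have hn : 26 ≤ x + 4 := by nlinarith
    have h1 : (x + 4) * (x + 3) * (4 * R * (x + 1)) ≤ (x + 4) * (x + 3) * (x + 1) * (12 * s) := by
      nlinarith [mul_le_mul_of_nonneg_left hR (by positivity : 0 ≤ (x + 4) * (x + 3) * (x + 1))]
    have h2 : s ^ 2 * (4 * x + 10) ≤ s * (x + 4) ^ 2 * (4 * x + 10) := by
      nlinarith [mul_le_mul_of_nonneg_left hsn (by positivity : 0 ≤ s * (4 * x + 10))]
    have h3 : 2 * (x + 4) * (x + 3) * (x + 2) * (x + 1) ≤ s * (x + 4) ^ 3 / 13 := by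
      nlinarith [mul_le_mul_of_nonneg_left hs (by positivity : 0 ≤ (x + 4) ^ 3)]
    nlinarith
  subst hK hM
  rw [div_mul_eq_mul_div, div_le_iff₀ (by positivity)]
  refine le_of_mul_le_mul_right ?_ (by positivity : 0 < (s ^ 2 * ((x + 2) * (x + 1) * F)) ^ 2)
  calc _ = Z * (s ^ 2 * ((x + 2) * (x + 1) * F)) ^ 2 * s := by ring
    _ ≤ _ := mul_le_mul_of_nonneg_right hZ hs0.le
    _ ≤ (x + 4) * (x + 3) * (x + 2) * (x + 1) * F * ((x + 4) * (x + 3) * (x + 2) * (x + 1) * F *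
          (2 * s ^ 2 * ((x + 2) * (x + 1) * F) + 4 * R * s ^ 2 * ((x + 1) * F) + s ^ 4 * F) -
          (s ^ 2 * ((x + 2) * (x + 1) * F)) ^ 2) * s := by gcongr
    _ = (x + 4) * (x + 3) * (x + 2) * (x + 1) * F * (F ^ 2 * s ^ 2 * (x + 2) * (x + 1)) *
          (((x + 4) * (x + 3) * (2 * (x + 2) * (x + 1) + 4 * R * (x + 1)) +
            s ^ 2 * (4 * x + 10)) * s) := by ring
    _ ≤ (x + 4) * (x + 3) * (x + 2) * (x + 1) * F * (F ^ 2 * s ^ 2 * (x + 2) * (x + 1)) *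
          (26 * (x + 4) * s * (x + 2) * (x + 1) * s) := by gcongr
    _ = _ := by ring

theorem liminf_eq_zero_of_frequently_le {ι : Type*} {l : Filter ι} {u : ι → ℝ} (h0 : ∀ i, 0 ≤ u i)
    (h : ∀ ε > 0, ∃ᶠ i in l, u i ≤ ε) : Filter.liminf u l = 0 := by
  refine le_antisymm (le_of_forall_pos_le_add fun ε hε => ?_)
    (Filter.le_liminf_of_le (.of_frequently_le (h 1 one_pos)) (.of_forall h0))
  simpa using Filter.liminf_le_of_frequently_le (h ε hε) (Filter.isBoundedUnder_of ⟨0, h0⟩)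

theorem liminf_eq_zero_of_mul_sqrt_le {u S : ℕ → ℝ} {K : ℝ} (hK : 0 ≤ K) (hu : ∀ n, 0 ≤ u n)
    (hS : ∀ n, S n ≤ (n : ℝ) ^ 2 * n ^ 2) (hbound : ∀ n, u n * √(S n) ≤ K * n)
    (hS_large : ∀ C : ℝ, ∃ n : ℕ, C * n ^ 2 < S n) : Filter.liminf u Filter.atTop = 0 := by
  refine liminf_eq_zero_of_frequently_le hu fun ε hε => Filter.frequently_atTop.2 fun M => ?_
  obtain ⟨N, hN⟩ := hS_large ((K / ε) ^ 2 + M ^ 2)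
  refine ⟨N, ?_, ?_⟩
  · by_contra! hNM
    have : (N : ℝ) ^ 2 ≤ M ^ 2 := by gcongr
    nlinarith [hS N, sq_nonneg (N : ℝ), sq_nonneg (K / ε)]
  · have hsqrt : K * N < ε * √(S N) := by
      rw [← div_lt_iff₀' hε, Real.lt_sqrt (by positivity), div_pow, mul_pow, mul_div_right_comm,
        ← div_pow]
      nlinarith [sq_nonneg (M : ℝ), sq_nonneg (N : ℝ)]
    have hpos : 0 < √(S N) := (mul_pos_iff_of_pos_left hε).1 (lt_of_le_of_lt (by positivity) hsqrt)
    exact le_of_mul_le_mul_right ((hbound N).trans hsqrt.le) hpos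

theorem sum_le_mul_of_card_le {ι : Type*} {s : Finset ι} {g : ι → ℕ} {k m : ℕ} (hk : #s ≤ k)
    (hm : ∀ x ∈ s, g x ≤ m) : ∑ x ∈ s, g x ≤ k * m :=
  (sum_le_card_nsmul s g m hm).trans (by rw [smul_eq_mul]; exact Nat.mul_le_mul_right m hk)

theorem card_filter_product_le {γ δ : Type*} (s : Finset γ) (t : Finset δ) (R : γ → δ → Prop)
    [∀ a b, Decidable (R a b)] {m : ℕ} (h : ∀ a ∈ s, #{b ∈ t | R a b} ≤ m) :
    #{x ∈ s ×ˢ t | R x.1 x.2} ≤ #s * m := by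
  calc #{x ∈ s ×ˢ t | R x.1 x.2} = ∑ a ∈ s, #{b ∈ t | R a b} := by
        simp only [card_filter, sum_product]
    _ ≤ #s * m := sum_le_mul_of_card_le le_rfl h

theorem apply_lt_of_card_fiber_eq {α : Type*} [Fintype α] {f : α → ℕ} {v : ℕ → ℕ} {m : ℕ}
    (hv : ∀ i, #{t | f t = i} = v i) (hsupp : ∀ i, m ≤ i → v i = 0) (t : α) : f t < m := by
  by_contra h
  have hpos : 0 < #{t' | f t' = f t} := card_pos.2 ⟨t, by simp⟩
  rw [hv, hsupp _ (not_lt.1 h)] at hpos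
  exact lt_irrefl 0 hpos

section PermCount

variable {α : Type*} [Fintype α] [DecidableEq α]

theorem card_perm_smul_eq {k : ℕ} (x y : Fin k ↪ α) :
    #{σ : Perm α | σ • x = y} = (Fintype.card α - k)! := by
  -- the fibres of `σ ↦ σ • x` are translates of one another, and there are `n.descFactorial k`
  have hfib : ∀ y, #{σ : Perm α | σ • x = y} = #{σ : Perm α | σ • x = x} := by
    intro y
    obtain ⟨τ, rfl⟩ := Perm.exists_smul_eq_embedding x y
    refine card_nbij' (τ⁻¹ * ·) (τ * ·) ?_ ?_ ?_ ?_ <;> intro σ hσ <;> simp_all [mul_smul]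
  have hsum := card_eq_sum_card_fiberwise (f := (· • x)) (s := (univ : Finset (Perm α)))
    (t := univ) (by simp)
  rw [card_univ, Fintype.card_perm, sum_congr rfl fun y _ => hfib y, sum_const, card_univ,
    Fintype.card_embedding_eq, Fintype.card_fin, smul_eq_mul] at hsum
  have hk : k ≤ Fintype.card α := by simpa using Fintype.card_le_of_embedding x
  rw [hfib y]
  refine Nat.eq_of_mul_eq_mul_left (Nat.descFactorial_pos.2 hk) ?_
  rw [mul_comm _ (Fintype.card α - k)!, Nat.factorial_mul_descFactorial hk, hsum]

theorem card_perm_forall_apply_eq_le {k : ℕ} {t : Fin k → α} (ht : Injective t) (s : Fin k → α) :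
    #{σ : Perm α | ∀ i, σ (t i) = s i} ≤ (Fintype.card α - k)! := by
  by_cases hs : Injective s
  · refine (card_perm_smul_eq ⟨t, ht⟩ ⟨s, hs⟩ ▸ le_of_eq (congrArg card (filter_congr ?_)))
    intro σ _
    simp [Embedding.ext_iff, Embedding.smul_apply, Perm.smul_def]
  · convert Nat.zero_le _
    rw [card_eq_zero, filter_eq_empty_iff]
    intro σ _ h
    exact hs fun i j hij => ht (σ.injective (by rw [h, h, hij]))

theorem card_perm_apply_eq_apply_eq {a b x y : α} (hab : a ≠ b) (hxy : x ≠ y) :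
    #{σ : Perm α | σ a = x ∧ σ b = y} = (Fintype.card α - 2)! := by
  have hinj : ∀ {c d : α}, c ≠ d → Injective ![c, d] := fun h i j => by
    fin_cases i <;> fin_cases j <;> simp [h, h.symm]
  rw [← card_perm_smul_eq ⟨_, hinj hab⟩ ⟨_, hinj hxy⟩]
  congr 1
  refine filter_congr fun σ _ => ?_
  simp [Embedding.ext_iff, Embedding.smul_apply, Perm.smul_def, Fin.forall_fin_two]

theorem card_perm_apply_eq₃_le {a b c : α} (hab : a ≠ b) (hac : a ≠ c) (hbc : b ≠ c)
    (x y z : α) : #{σ : Perm α | σ a = x ∧ σ b = y ∧ σ c = z} ≤ (Fintype.card α - 3)! := by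
  have hinj : Injective ![a, b, c] := fun i j => by
    fin_cases i <;> fin_cases j <;> simp [*, Ne.symm]
  refine le_of_eq_of_le (congrArg card (filter_congr fun σ _ => ?_))
    (card_perm_forall_apply_eq_le hinj ![x, y, z])
  simp [Fin.forall_fin_succ]

theorem card_perm_apply_eq₄_le {a b c d : α} (hab : a ≠ b) (hac : a ≠ c) (had : a ≠ d)
    (hbc : b ≠ c) (hbd : b ≠ d) (hcd : c ≠ d) (x y z w : α) :
    #{σ : Perm α | σ a = x ∧ σ b = y ∧ σ c = z ∧ σ d = w} ≤ (Fintype.card α - 4)! := by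
  have hinj : Injective ![a, b, c, d] := fun i j => by
    fin_cases i <;> fin_cases j <;> simp [*, Ne.symm]
  refine le_of_eq_of_le (congrArg card (filter_congr fun σ _ => ?_))
    (card_perm_forall_apply_eq_le hinj ![x, y, z, w])
  simp [Fin.forall_fin_succ]

end PermCount

section SamePairs

variable {α β : Type*} [Fintype α] [DecidableEq α] [DecidableEq β]

def samePairs (f : α → β) : Finset (α × α) := {p | p.1 ≠ p.2 ∧ f p.1 = f p.2}

@[simp]
theorem mem_samePairs {f : α → β} {p : α × α} :
    p ∈ samePairs f ↔ p.1 ≠ p.2 ∧ f p.1 = f p.2 := by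
  simp [samePairs]

theorem card_samePairs_le (f : α → β) : #(samePairs f) ≤ Fintype.card α ^ 2 := by
  rw [sq, ← Fintype.card_prod]
  exact card_filter_le _ _

theorem card_samePairs_mul_le (f g : α → β) :
    (#(samePairs f) * #(samePairs g) : ℝ) ≤ Fintype.card α ^ 2 * Fintype.card α ^ 2 := by
  exact_mod_cast Nat.mul_le_mul (card_samePairs_le f) (card_samePairs_le g)

theorem offDiag_filter_subset_samePairs (f : α → β) (t : α) :
    ({t' | f t' = f t} : Finset α).offDiag ⊆ samePairs f := by
  intro p hp
  simp only [mem_offDiag, mem_filter, mem_univ, true_and] at hp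
  simp [hp.2.2, hp.1.trans hp.2.1.symm]

theorem exists_card_fiber_le (f : α → β) (hf : 0 < #(samePairs f)) :
    ∃ r₀ : ℕ, (∀ t, #{t' | f t' = f t} ≤ r₀) ∧ r₀ ^ 2 ≤ 3 * #(samePairs f) := by
  obtain ⟨p, -⟩ := card_pos.1 hf
  have : Nonempty α := ⟨p.1⟩
  obtain ⟨t₀, -, ht₀⟩ := exists_max_image univ (fun t => #{t' | f t' = f t}) univ_nonempty
  refine ⟨_, fun t => ht₀ t (mem_univ t), ?_⟩
  have h := card_le_card (offDiag_filter_subset_samePairs f t₀)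
  rw [offDiag_card] at h
  generalize #{t' | f t' = f t₀} = r at h ⊢
  rcases Nat.lt_or_ge r 2 with hr | hr
  · interval_cases r <;> omega
  · nlinarith [Nat.sub_add_cancel (Nat.le_mul_self r)]

theorem card_samePairs_filter_shared_le (f : α → β) {r₀ : ℕ}
    (hr₀ : ∀ t, #{t' | f t' = f t} ≤ r₀) {p : α × α} (hp : p ∈ samePairs f) :
    #{q ∈ samePairs f | q.1 = p.1 ∨ q.1 = p.2 ∨ q.2 = p.1 ∨ q.2 = p.2} ≤ 4 * r₀ := by
  set F : Finset α := {t' | f t' = f p.1}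
  have hsub : {q ∈ samePairs f | q.1 = p.1 ∨ q.1 = p.2 ∨ q.2 = p.1 ∨ q.2 = p.2} ⊆
      ({p.1, p.2} ×ˢ F) ∪ (F ×ˢ {p.1, p.2}) := by
    intro q hq
    simp only [mem_filter, mem_samePairs] at hq hp
    grind
  refine (card_le_card hsub).trans ((card_union_le _ _).trans ?_)
  rw [card_product, card_product]
  have h2 := card_le_two (a := p.1) (b := p.2)
  have hF := hr₀ p.1
  nlinarith

theorem card_samePairs_eq_sum {f : α → ℕ} {v : ℕ → ℕ} {m : ℕ} (hv : ∀ i, #{t | f t = i} = v i)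
    (hlt : ∀ t, f t < m) : #(samePairs f) = ∑ i ∈ range m, v i * (v i - 1) := by
  rw [card_eq_sum_card_fiberwise (f := fun p => f p.1) (t := range m)
    fun p _ => mem_range.2 (hlt p.1)]
  refine sum_congr rfl fun i _ => ?_
  rw [← hv, Nat.mul_sub_one, ← offDiag_card]
  congr 1
  ext ⟨a, b⟩
  simp only [mem_filter, mem_samePairs, mem_offDiag, mem_univ, true_and]
  grind

theorem card_perm_comp_eq (g : α → β) {a b : α} (hab : a ≠ b) :
    #{σ : Perm α | g (σ a) = g (σ b)} = #(samePairs g) * (Fintype.card α - 2)! := by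
  rw [card_eq_sum_card_fiberwise (f := fun σ : Perm α => (σ a, σ b)) (t := samePairs g)
    fun σ hσ => by simpa [hab] using hσ]
  refine sum_const_nat fun q hq => ?_
  rw [← card_perm_apply_eq_apply_eq hab (mem_samePairs.1 hq).1, filter_filter]
  congr 1
  refine filter_congr fun σ _ => ?_
  rw [mem_samePairs] at hq
  constructor
  · rintro ⟨-, rfl⟩
    simp
  · rintro ⟨h1, h2⟩
    simp [h1, h2, hq.2]

theorem card_perm_comp_eq₃_le (g : α → β) {c₀ : ℕ} (hc₀ : ∀ t, #{t' | g t' = g t} ≤ c₀)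
    {a b x : α} (hab : a ≠ b) (hax : a ≠ x) (hbx : b ≠ x) :
    #{σ : Perm α | g (σ a) = g (σ b) ∧ g (σ x) = g (σ a)} ≤
      #(samePairs g) * c₀ * (Fintype.card α - 3)! := by
  set T := {z ∈ samePairs g ×ˢ (univ : Finset α) | g z.2 = g z.1.1}
  have hT : #T ≤ #(samePairs g) * c₀ :=
    card_filter_product_le _ _ (fun (q : α × α) (t : α) => g t = g q.1) fun q _ => hc₀ q.1
  refine (card_le_mul_card_image_of_maps_to (f := fun σ : Perm α => ((σ a, σ b), σ x)) (t := T)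
    (fun σ hσ => by simp_all [T]) (Fintype.card α - 3)! fun z _ => ?_).trans ?_
  · refine (card_le_card fun σ hσ => ?_).trans (card_perm_apply_eq₃_le hab hax hbx z.1.1 z.1.2 z.2)
    simp only [mem_filter, Prod.ext_iff] at hσ ⊢
    exact ⟨mem_univ σ, hσ.2.1.1, hσ.2.1.2, hσ.2.2⟩
  · rw [mul_comm]
    exact Nat.mul_le_mul_right _ hT

theorem card_perm_comp_eq₄_le (g : α → β) {a b u w : α} (hab : a ≠ b) (hau : a ≠ u)
    (haw : a ≠ w) (hbu : b ≠ u) (hbw : b ≠ w) (huw : u ≠ w) :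
    #{σ : Perm α | g (σ a) = g (σ b) ∧ g (σ u) = g (σ w)} ≤
      #(samePairs g) ^ 2 * (Fintype.card α - 4)! := by
  refine (card_le_mul_card_image_of_maps_to
    (f := fun σ : Perm α => ((σ a, σ b), (σ u, σ w))) (t := samePairs g ×ˢ samePairs g)
    (fun σ hσ => by simp_all) (Fintype.card α - 4)! fun z _ => ?_).trans
    (by rw [card_product, sq, mul_comm])
  refine (card_le_card fun σ hσ => ?_).trans
    (card_perm_apply_eq₄_le hab hau haw hbu hbw huw z.1.1 z.1.2 z.2.1 z.2.2)
  simp only [mem_filter, Prod.ext_iff] at hσ ⊢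
  exact ⟨mem_univ σ, hσ.2.1.1, hσ.2.1.2, hσ.2.2.1, hσ.2.2.2⟩

theorem card_perm_comp_eq_of_shared_le (g : α → β) {c₀ : ℕ}
    (hc₀ : ∀ t, #{t' | g t' = g t} ≤ c₀) {p q : α × α} (hp : p.1 ≠ p.2) (hq : q.1 ≠ q.2)
    (hne : ¬(q = p ∨ q = p.swap)) (hshared : q.1 = p.1 ∨ q.1 = p.2 ∨ q.2 = p.1 ∨ q.2 = p.2) :
    #{σ : Perm α | g (σ p.1) = g (σ p.2) ∧ g (σ q.1) = g (σ q.2)} ≤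
      #(samePairs g) * c₀ * (Fintype.card α - 3)! := by
  obtain ⟨a, b⟩ := p
  obtain ⟨u, w⟩ := q
  simp only [Prod.mk.injEq, Prod.swap_prod_mk] at hp hq hne hshared ⊢
  -- `x` is the token of `(u, w)` outside `{a, b}`; a double collision puts `a, b, x` in one class
  obtain ⟨x, hax, hbx, hx⟩ : ∃ x, a ≠ x ∧ b ≠ x ∧ ∀ σ : Perm α,
      g (σ a) = g (σ b) → g (σ u) = g (σ w) → g (σ x) = g (σ a) := by
    rcases hshared with rfl | rfl | rfl | rfl
    · exact ⟨w, by grind, by grind, fun σ h h' => h'.symm⟩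
    · exact ⟨w, by grind, by grind, fun σ h h' => h'.symm.trans h.symm⟩
    · exact ⟨u, by grind, by grind, fun σ h h' => h'⟩
    · exact ⟨u, by grind, by grind, fun σ h h' => h'.trans h.symm⟩
  exact (card_le_card (monotone_filter_right _ fun σ _ h => ⟨h.1, hx σ h.1 h.2⟩)).trans
    (card_perm_comp_eq₃_le g hc₀ hp hax hbx)

end SamePairs

section Collisions

variable {α β : Type*} [Fintype α] [DecidableEq α] [DecidableEq β]

/-- Token `t` lands in the cell `(row t, col (σ t))`; this counts the ordered pairs of distinct
tokens landing in a common cell. -/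
def collisionCount (row col : α → β) (σ : Perm α) : ℕ :=
  #{p ∈ samePairs row | col (σ p.1) = col (σ p.2)}

theorem collisionCount_eq_zero_of_card_le_one {row col : α → ℕ} {m : ℕ} (hrow : ∀ t, row t < m)
    (hcol : ∀ t, col t < m) {σ : Perm α}
    (hσ : ∀ i ∈ range m, ∀ j ∈ range m, #{t | row t = i ∧ col (σ t) = j} ≤ 1) :
    collisionCount row col σ = 0 := by
  rw [collisionCount, card_eq_zero, filter_eq_empty_iff]
  rintro ⟨a, b⟩ hp hcoll
  rw [mem_samePairs] at hp
  dsimp only at hp hcoll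
  have hsub : {a, b} ⊆ ({t | row t = row a ∧ col (σ t) = col (σ a)} : Finset α) := by
    intro t ht
    rcases mem_insert.1 ht with rfl | ht
    · simp
    · rw [mem_singleton.1 ht]
      simp [hp.2, hcoll]
  have := (card_le_card hsub).trans (hσ _ (mem_range.2 (hrow a)) _ (mem_range.2 (hcol (σ a))))
  rw [card_pair hp.1] at this
  omega

theorem sum_collisionCount (row col : α → β) :
    ∑ σ : Perm α, collisionCount row col σ =
      #(samePairs row) * (#(samePairs col) * (Fintype.card α - 2)!) := by
  simp only [collisionCount, card_filter]
  rw [sum_comm]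
  simp only [← card_filter]
  exact sum_const_nat fun p hp => card_perm_comp_eq col (mem_samePairs.1 hp).1

theorem sum_collisionCount_sq (row col : α → β) :
    ∑ σ : Perm α, collisionCount row col σ ^ 2 = ∑ pq ∈ samePairs row ×ˢ samePairs row,
      #{σ : Perm α | col (σ pq.1.1) = col (σ pq.1.2) ∧ col (σ pq.2.1) = col (σ pq.2.2)} := by
  have hsq : ∀ σ : Perm α, collisionCount row col σ ^ 2 = #{pq ∈ samePairs row ×ˢ samePairs row |
      col (σ pq.1.1) = col (σ pq.1.2) ∧ col (σ pq.2.1) = col (σ pq.2.2)} := fun σ => by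
    rw [collisionCount, sq, ← card_product, ← filter_product]
  simp only [hsq, card_filter]
  rw [sum_comm]

theorem sum_collisionCount_sq_le (row col : α → β) {r₀ c₀ : ℕ}
    (hr₀ : ∀ t, #{t' | row t' = row t} ≤ r₀) (hc₀ : ∀ t, #{t' | col t' = col t} ≤ c₀) :
    ∑ σ : Perm α, collisionCount row col σ ^ 2 ≤
      #(samePairs row) * 2 * (#(samePairs col) * (Fintype.card α - 2)!) +
      #(samePairs row) * (4 * r₀) * (#(samePairs col) * c₀ * (Fintype.card α - 3)!) +
      #(samePairs row) * #(samePairs row) *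
        (#(samePairs col) ^ 2 * (Fintype.card α - 4)!) := by
  set P := samePairs row with hP
  rw [sum_collisionCount_sq,
    ← sum_filter_add_sum_filter_not _ fun pq => pq.2 = pq.1 ∨ pq.2 = pq.1.swap,
    ← sum_filter_add_sum_filter_not {pq ∈ P ×ˢ P | ¬(pq.2 = pq.1 ∨ pq.2 = pq.1.swap)}
      fun pq => pq.2.1 = pq.1.1 ∨ pq.2.1 = pq.1.2 ∨ pq.2.2 = pq.1.1 ∨ pq.2.2 = pq.1.2,
    ← add_assoc]
  gcongr ?_ + ?_ + ?_
  · refine sum_le_mul_of_card_le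
      (card_filter_product_le P P (fun p q => q = p ∨ q = p.swap) fun p _ => ?_) fun pq hpq => ?_
    · exact (card_le_card (t := {p, p.swap}) fun q hq => by simp_all).trans card_le_two
    · simp only [mem_filter, mem_product] at hpq
      exact (card_le_card (monotone_filter_right _ fun σ _ h => h.1)).trans
        (card_perm_comp_eq col (mem_samePairs.1 hpq.1.1).1).le
  · refine sum_le_mul_of_card_le ((card_le_card (filter_subset_filter _ (filter_subset _ _))).trans
      (card_filter_product_le P P _ fun p hp => card_samePairs_filter_shared_le row hr₀ hp))
      fun pq hpq => ?_
    simp only [hP, mem_filter, mem_product, mem_samePairs] at hpq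
    exact card_perm_comp_eq_of_shared_le col hc₀ hpq.1.1.1.1 hpq.1.1.2.1 hpq.1.2 hpq.2
  · refine sum_le_mul_of_card_le ((card_le_card (filter_subset _ _)).trans
      ((card_le_card (filter_subset _ _)).trans (card_product P P).le)) fun pq hpq => ?_
    simp only [hP, mem_filter, mem_product, mem_samePairs, not_or] at hpq
    obtain ⟨⟨⟨⟨hab, -⟩, huw, -⟩, -⟩, hua, hub, hwa, hwb⟩ := hpq
    exact card_perm_comp_eq₄_le col hab (Ne.symm hua) (Ne.symm hwa) (Ne.symm hub) (Ne.symm hwb) huw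

theorem exists_card_fiber_mul_le (row col : α → β) (hpq : 0 < #(samePairs row) * #(samePairs col)) :
    ∃ r₀ c₀ : ℕ, (∀ t, #{t' | row t' = row t} ≤ r₀) ∧ (∀ t, #{t' | col t' = col t} ≤ c₀) ∧
      (r₀ * c₀ : ℝ) ≤ 3 * √(#(samePairs row) * #(samePairs col)) := by
  obtain ⟨r₀, hr₀, hr₀sq⟩ := exists_card_fiber_le row (Nat.pos_of_mul_pos_right hpq)
  obtain ⟨c₀, hc₀, hc₀sq⟩ := exists_card_fiber_le col (Nat.pos_of_mul_pos_left hpq)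
  refine ⟨r₀, c₀, hr₀, hc₀, (pow_le_pow_iff_left₀ (by positivity) (by positivity) two_ne_zero).1 ?_⟩
  rw [mul_pow, mul_pow, Real.sq_sqrt (by positivity)]
  have hr : (r₀ : ℝ) ^ 2 ≤ 3 * #(samePairs row) := by exact_mod_cast hr₀sq
  have hc : (c₀ : ℝ) ^ 2 ≤ 3 * #(samePairs col) := by exact_mod_cast hc₀sq
  nlinarith [mul_le_mul hr hc (by positivity) (by positivity)]

theorem card_collisionCount_eq_zero_div_mul_sqrt_le (row col : α → β) :
    (#{σ : Perm α | collisionCount row col σ = 0} : ℝ) / (Fintype.card α)! *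
      √(#(samePairs row) * #(samePairs col)) ≤ 26 * Fintype.card α := by
  set s := √((#(samePairs row) : ℝ) * #(samePairs col))
  by_cases hsmall : s ≤ 26 * Fintype.card α
  · have hZ : (#{σ : Perm α | collisionCount row col σ = 0} : ℝ) ≤ (Fintype.card α)! := by
      exact_mod_cast (card_filter_le _ _).trans (by rw [card_univ, Fintype.card_perm])
    calc _ ≤ 1 * s := by gcongr; exact div_le_one_of_le₀ hZ (by positivity)
      _ ≤ _ := by rwa [one_mul]
  rw [not_le] at hsmall
  have hs2 : s ^ 2 = #(samePairs row) * #(samePairs col) := Real.sq_sqrt (by positivity)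
  have hsn : s ≤ (Fintype.card α : ℝ) ^ 2 :=
    (Real.sqrt_le_left (by positivity)).2 ((card_samePairs_mul_le row col).trans_eq (by ring))
  have hpq : 0 < #(samePairs row) * #(samePairs col) := by
    rw [← Nat.cast_pos (α := ℝ), Nat.cast_mul, ← hs2]
    exact pow_pos (lt_of_le_of_lt (by positivity) hsmall) 2
  obtain ⟨r₀, c₀, hr₀, hc₀, hR⟩ := exists_card_fiber_mul_le row col hpq
  have h1 := sum_collisionCount row col
  have h2 := sum_collisionCount_sq_le row col hr₀ hc₀
  have h3 := card_filter_eq_zero_mul_sq_sum_le univ fun σ : Perm α => (collisionCount row col σ : ℝ)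
  simp only [card_univ, Fintype.card_perm, Nat.cast_eq_zero] at h3
  have h4 : 4 ≤ Fintype.card α := by exact_mod_cast (by nlinarith : (4 : ℝ) ≤ Fintype.card α)
  obtain ⟨m, hm⟩ := Nat.exists_eq_add_of_le' h4
  rw [hm] at h1 h2 h3 hsn hsmall ⊢
  simp only [show m + 4 - 2 = m + 2 by omega, show m + 4 - 3 = m + 1 by omega,
    show m + 4 - 4 = m by omega] at h1 h2
  push_cast at hsn hsmall ⊢
  refine div_mul_le_of_second_moment (F := (m ! : ℝ))
    (S := ∑ σ : Perm α, (collisionCount row col σ : ℝ) ^ 2) (Nat.cast_nonneg m) hsmall.le hsn hR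
    (by positivity) (by push_cast [Nat.factorial_succ]; ring) ?_ h3 ?_
  · rw [← Nat.cast_sum, h1, hs2]
    push_cast [Nat.factorial_succ]
    ring
  · have := (Nat.cast_le (α := ℝ)).2 h2
    push_cast [Nat.factorial_succ] at this
    rw [show s ^ 4 = (s ^ 2) ^ 2 by ring, hs2]
    linarith

end Collisions

theorem probBinary_mul_sqrt_le (rowOf colOf : (N : ℕ) → Fin N → ℕ) (N : ℕ)
    (hrow : ∀ t, rowOf N t < N) (hcol : ∀ t, colOf N t < N) :
    probBinary rowOf colOf N * √(#(samePairs (rowOf N)) * #(samePairs (colOf N))) ≤ 26 * N := by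
  refine le_trans ?_
    (by simpa only [Fintype.card_fin] using
      card_collisionCount_eq_zero_div_mul_sqrt_le (rowOf N) (colOf N))
  unfold probBinary
  rw [Fintype.card_subtype]
  gcongr
  exact collisionCount_eq_zero_of_card_le_one hrow hcol

theorem liminf_prob_binary_zero_of_not_bigO_general
    (r c : ℕ → ℕ → ℕ)
    (hrsupp : ∀ N i, N ≤ i → r N i = 0) (hcsupp : ∀ N j, N ≤ j → c N j = 0)
    (rowOf colOf : (N : ℕ) → Fin N → ℕ)
    (hrow : ∀ N i, (univ.filter (fun t => rowOf N t = i)).card = r N i)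
    (hcol : ∀ N j, (univ.filter (fun t => colOf N (t) = j)).card = c N j)
    (hnotO : ¬ ∃ C : ℝ, ∀ N : ℕ,
        (∑ i ∈ Finset.range N, ∑ j ∈ Finset.range N,
          ((r N i * (r N i - 1) * (c N j * (c N j - 1)) : ℕ) : ℝ)) ≤ C * (N : ℝ) ^ 2) :
    Filter.liminf (probBinary rowOf colOf) Filter.atTop = 0 := by
  have hrow_lt N := apply_lt_of_card_fiber_eq (hrow N) (hrsupp N)
  have hcol_lt N := apply_lt_of_card_fiber_eq (hcol N) (hcsupp N)
  refine liminf_eq_zero_of_mul_sqrt_le (by norm_num : (0 : ℝ) ≤ 26)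
    (fun N => by unfold probBinary; positivity)
    (fun N => by simpa using card_samePairs_mul_le (rowOf N) (colOf N))
    (fun N => probBinary_mul_sqrt_le rowOf colOf N (hrow_lt N) (hcol_lt N)) fun C => ?_
  simp only [not_exists, not_forall, not_le] at hnotO
  obtain ⟨N, hN⟩ := hnotO C
  refine ⟨N, hN.trans_eq ?_⟩
  rw [card_samePairs_eq_sum (hrow N) (hrow_lt N), card_samePairs_eq_sum (hcol N) (hcol_lt N)]
  push_cast
  rw [sum_mul_sum]

/-- Proposition 1, necessity: if
`∑_{i,j} r_i(r_i−1)c_j(c_j−1)` is not `O(N²)` (equivalently `limsup μ(N) = ∞`),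
then `liminf P(T ∈ Ω_{r,c}) = 0`. -/
theorem liminf_prob_binary_zero_of_not_bigO
    (r c : ℕ → ℕ → ℕ)
    (hrsupp : ∀ N i, N ≤ i → r N i = 0) (hcsupp : ∀ N j, N ≤ j → c N j = 0)
    (hrmono : ∀ N, ∀ i i', i ≤ i' → r N i' ≤ r N i)
    (hcmono : ∀ N, ∀ j j', j ≤ j' → c N j' ≤ c N j)
    (hrN : ∀ N, ∑ i ∈ Finset.range N, r N i = N)
    (hcN : ∀ N, ∑ j ∈ Finset.range N, c N j = N)
    (rowOf colOf : (N : ℕ) → Fin N → ℕ)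
    (hrow : ∀ N i, (univ.filter (fun t => rowOf N t = i)).card = r N i)
    (hcol : ∀ N j, (univ.filter (fun t => colOf N (t) = j)).card = c N j)
    (hnotO : ¬ ∃ C : ℝ, ∀ N : ℕ,
        (∑ i ∈ Finset.range N, ∑ j ∈ Finset.range N,
          ((r N i * (r N i - 1) * (c N j * (c N j - 1)) : ℕ) : ℝ)) ≤ C * (N : ℝ) ^ 2) :
    Filter.liminf (probBinary rowOf colOf) Filter.atTop = 0 :=
  liminf_prob_binary_zero_of_not_bigO_general r c hrsupp hcsupp rowOf colOf hrow hcol hnotO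
end
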